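/- Let F be a field, let V and W be F-vector spaces, let e : V → W be a linear map, and let A, B be finite-dimensional subspaces of V. Then dim(e(A) ∩ e(B)) ≤ dim(A ∩ B) + dim((A + B) ∩ ker e), and dim(e(A) ∩ e(B)) ≥ dim(A ∩ B) − dim(A ∩ B ∩ ker e). -/

import Mathlib

/-!
Rank–nullity for `e` restricted to a subspace `p` gives `dim e(p) = dim p - dim (p ∩ ker e)`.
Applying it to `A`, `B` and `A + B`, and using `e(A) + e(B) = e(A + B)` together with the
Grassmann formula on both sides of `e`, yields the exact identity
`dim (e(A) ∩ e(B)) + dim (A ∩ ker e) + dim (B ∩ ker e) = dim (A ∩ B) + dim ((A + B) ∩ ker e)`,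
which gives the upper bound. The lower bound comes from `e(A ∩ B) ≤ e(A) ∩ e(B)`.
-/

open Module Submodule

universe u v w

variable {F : Type u} {V : Type v} {W : Type w} [DivisionRing F]
  [AddCommGroup V] [Module F V] [AddCommGroup W] [Module F W]

theorem Submodule.finrank_map_add_finrank_inf_ker (e : V →ₗ[F] W) (p : Submodule F V)
    [FiniteDimensional F p] :
    finrank F (p.map e) + finrank F ↥(p ⊓ LinearMap.ker e) = finrank F p := by
  have hker : LinearMap.ker (e.domRestrict p) = (p ⊓ LinearMap.ker e).comap p.subtype := by
    ext x
    simp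
  have h := LinearMap.finrank_range_add_finrank_ker (e.domRestrict p)
  rwa [LinearMap.range_domRestrict, hker, (comapSubtypeEquivOfLe inf_le_left).finrank_eq] at h

theorem Submodule.finrank_map_inf_map_add_finrank_inf_ker_add_finrank_inf_ker
    (e : V →ₗ[F] W) (A B : Submodule F V) [FiniteDimensional F A] [FiniteDimensional F B] :
    finrank F ↥(A.map e ⊓ B.map e) + finrank F ↥(A ⊓ LinearMap.ker e)
        + finrank F ↥(B ⊓ LinearMap.ker e) =
      finrank F ↥(A ⊓ B) + finrank F ↥((A ⊔ B) ⊓ LinearMap.ker e) := by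
  have hA := finrank_map_add_finrank_inf_ker e A
  have hB := finrank_map_add_finrank_inf_ker e B
  have hAB := finrank_map_add_finrank_inf_ker e (A ⊔ B)
  have hV := finrank_sup_add_finrank_inf_eq A B
  have hW := finrank_sup_add_finrank_inf_eq (A.map e) (B.map e)
  rw [← map_sup] at hW
  omega

theorem Submodule.finrank_sub_finrank_inf_ker_le_finrank_map_inf_map
    (e : V →ₗ[F] W) (A B : Submodule F V) [FiniteDimensional F A] :
    finrank F ↥(A ⊓ B) - finrank F ↥(A ⊓ B ⊓ LinearMap.ker e) ≤
      finrank F ↥(A.map e ⊓ B.map e) := by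
  rw [← finrank_map_add_finrank_inf_ker e (A ⊓ B), Nat.add_sub_cancel]
  exact finrank_mono (le_inf (map_mono inf_le_left) (map_mono inf_le_right))

theorem stmt17 {F : Type*} [Field F] {V W : Type*} [AddCommGroup V] [Module F V]
    [AddCommGroup W] [Module F W] (e : V →ₗ[F] W) (A B : Submodule F V)
    [FiniteDimensional F A] [FiniteDimensional F B] :
    Module.finrank F ↥(A.map e ⊓ B.map e) ≤
        Module.finrank F ↥(A ⊓ B) + Module.finrank F ↥((A ⊔ B) ⊓ LinearMap.ker e) ∧
    Module.finrank F ↥(A ⊓ B) - Module.finrank F ↥(A ⊓ B ⊓ LinearMap.ker e) ≤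
        Module.finrank F ↥(A.map e ⊓ B.map e) := by
  refine ⟨?_, finrank_sub_finrank_inf_ker_le_finrank_map_inf_map e A B⟩
  have := finrank_map_inf_map_add_finrank_inf_ker_add_finrank_inf_ker e A B
  omega
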